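/- If C is a minor-closed, dual-closed class of matroids, then the class of k-polymatroids ρ with M_ρ^k ∈ C is closed under k-duality. -/
import Mathlib

structure IsPolymatroid {α : Type*} [DecidableEq α] (E : Finset α) (ρ : Finset α → ℕ) : Prop where
  normalized : ρ ∅ = 0
  monotone : ∀ A B : Finset α, A ⊆ B → B ⊆ E → ρ A ≤ ρ B
  submodular : ∀ A B : Finset α, A ⊆ E → B ⊆ E → ρ (A ∪ B) + ρ (A ∩ B) ≤ ρ A + ρ B

def natRank {α β : Type*} [DecidableEq α] [DecidableEq β] (E : Finset α) (ρ : Finset α → ℕ)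
    (X : α → Finset β) (Y : Finset β) : ℕ :=
  (E.powerset.image fun A => ρ A + (Y \ A.biUnion X).card).min'
    ((E.powerset_nonempty).image _)

def kDual {α : Type*} [DecidableEq α] (E : Finset α) (k : ℕ) (ρ : Finset α → ℕ)
    (Y : Finset α) : ℕ :=
  k * Y.card + ρ (E \ Y) - ρ E

lemma natRank_le {α β : Type*} [DecidableEq α] [DecidableEq β] (E : Finset α) (ρ : Finset α → ℕ)
    (X : α → Finset β) (Y : Finset β) {A : Finset α} (hA : A ⊆ E) :
    natRank E ρ X Y ≤ ρ A + (Y \ A.biUnion X).card :=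
  Finset.min'_le _ _ (Finset.mem_image.2 ⟨A, Finset.mem_powerset.2 hA, rfl⟩)

lemma natRank_exists {α β : Type*} [DecidableEq α] [DecidableEq β] (E : Finset α) (ρ : Finset α → ℕ)
    (X : α → Finset β) (Y : Finset β) :
    ∃ A ⊆ E, natRank E ρ X Y = ρ A + (Y \ A.biUnion X).card := by
  have := Finset.min'_mem (E.powerset.image fun A => ρ A + (Y \ A.biUnion X).card)
    ((E.powerset_nonempty).image _)
  rw [Finset.mem_image] at this
  obtain ⟨A, hA, hval⟩ := this
  exact ⟨A, Finset.mem_powerset.1 hA, hval.symm⟩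

section main
variable {α β : Type*} [DecidableEq α] [DecidableEq β] {k : ℕ} {E : Finset α} {ρ : Finset α → ℕ}
  {X : α → Finset β}

lemma card_biUnion_k (hcard : ∀ e ∈ E, (X e).card = k)
    (hdisjX : ∀ e ∈ E, ∀ f ∈ E, e ≠ f → Disjoint (X e) (X f))
    {A : Finset α} (hA : A ⊆ E) : (A.biUnion X).card = k * A.card := by
  rw [Finset.card_biUnion (fun x hx y hy hxy => hdisjX x (hA hx) y (hA hy) hxy)]
  rw [Finset.sum_congr rfl (fun x hx => hcard x (hA hx)), Finset.sum_const, smul_eq_mul, mul_comm]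

lemma sdiff_biUnion (hdisjX : ∀ e ∈ E, ∀ f ∈ E, e ≠ f → Disjoint (X e) (X f))
    {A : Finset α} (hA : A ⊆ E) :
    E.biUnion X \ A.biUnion X = (E \ A).biUnion X := by
  ext x
  simp only [Finset.mem_sdiff, Finset.mem_biUnion]
  constructor
  · rintro ⟨⟨e, he, hxe⟩, hnot⟩
    exact ⟨e, ⟨he, fun heA => hnot ⟨e, heA, hxe⟩⟩, hxe⟩
  · rintro ⟨e, ⟨he1, he2⟩, hxe⟩
    refine ⟨⟨e, he1, hxe⟩, ?_⟩
    rintro ⟨f, hfA, hxf⟩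
    rcases eq_or_ne e f with rfl | hne
    · exact he2 hfA
    · have := (hdisjX e he1 f (hA hfA) hne).le_bot (Finset.mem_inter.2 ⟨hxe, hxf⟩)
      simp at this

lemma rank_le_aux (h : IsPolymatroid E ρ) (hk : ∀ e ∈ E, ρ {e} ≤ k) :
    ∀ A : Finset α, A ⊆ E → ρ E ≤ ρ (E \ A) + k * A.card := by
  intro A
  induction A using Finset.induction_on with
  | empty => intro _; simp
  | @insert a A ha ih =>
    intro hsub
    have haE : a ∈ E := hsub (Finset.mem_insert_self a A)
    have hAE : A ⊆ E := (Finset.subset_insert a A).trans hsub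
    have hstep : ρ (E \ A) ≤ ρ (E \ insert a A) + k := by
      have hna : a ∉ A := ha
      have hu : (E \ insert a A) ∪ {a} = E \ A := by
        ext x
        simp only [Finset.mem_union, Finset.mem_sdiff, Finset.mem_insert, Finset.mem_singleton]
        constructor
        · rintro (⟨hxE, hx⟩ | rfl)
          · exact ⟨hxE, fun hxA => hx (Or.inr hxA)⟩
          · exact ⟨haE, hna⟩
        · rintro ⟨hxE, hxA⟩
          rcases eq_or_ne x a with rfl | hx
          · exact Or.inr rfl
          · exact Or.inl ⟨hxE, fun hc => hc.elim hx hxA⟩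
      have hi : (E \ insert a A) ∩ {a} = ∅ := by
        ext x
        simp only [Finset.mem_inter, Finset.mem_sdiff, Finset.mem_insert, Finset.mem_singleton,
          Finset.notMem_empty, iff_false]
        rintro ⟨⟨_, hx⟩, rfl⟩
        exact hx (Or.inl rfl)
      have := h.submodular (E \ insert a A) {a} (Finset.sdiff_subset)
        (Finset.singleton_subset_iff.2 haE)
      rw [hu, hi, h.normalized] at this
      calc ρ (E \ A) ≤ ρ (E \ insert a A) + ρ {a} := by omega
        _ ≤ ρ (E \ insert a A) + k := by have := hk a haE; omega
    have := ih hAE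
    rw [Finset.card_insert_of_notMem ha]
    have : k * (A.card + 1) = k * A.card + k := by ring
    omega

lemma natRank_ground (h : IsPolymatroid E ρ) (hk : ∀ e ∈ E, ρ {e} ≤ k)
    (hcard : ∀ e ∈ E, (X e).card = k)
    (hdisjX : ∀ e ∈ E, ∀ f ∈ E, e ≠ f → Disjoint (X e) (X f)) :
    natRank E ρ X (E.biUnion X) = ρ E := by
  apply le_antisymm
  · have := natRank_le E ρ X (E.biUnion X) (Finset.Subset.refl E)
    simpa using this
  · obtain ⟨A, hA, hval⟩ := natRank_exists E ρ X (E.biUnion X)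
    rw [hval, sdiff_biUnion hdisjX hA, card_biUnion_k hcard hdisjX Finset.sdiff_subset]
    have haux := rank_le_aux h hk (E \ A) Finset.sdiff_subset
    rwa [Finset.sdiff_sdiff_self_left, Finset.inter_eq_right.2 hA] at haux

/-- key term identity -/
lemma term_identity (h : IsPolymatroid E ρ) (hk : ∀ e ∈ E, ρ {e} ≤ k)
    (hcard : ∀ e ∈ E, (X e).card = k)
    (hdisjX : ∀ e ∈ E, ∀ f ∈ E, e ≠ f → Disjoint (X e) (X f))
    {A : Finset α} (hA : A ⊆ E) {Y : Finset β} (hY : Y ⊆ E.biUnion X) :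
    kDual E k ρ A + (Y \ A.biUnion X).card + ρ E
      = Y.card + (ρ (E \ A) + ((E.biUnion X \ Y) \ (E \ A).biUnion X).card) := by
  have hBE : (E \ A) ⊆ E := Finset.sdiff_subset
  have hXB : (E \ A).biUnion X ⊆ E.biUnion X :=
    Finset.biUnion_subset_biUnion_of_subset_left X hBE
  have h1 : kDual E k ρ A + ρ E = k * A.card + ρ (E \ A) := by
    have hge : ρ E ≤ ρ (E \ A) + k * A.card := rank_le_aux h hk A hA
    unfold kDual
    omega
  have h2 : Y \ A.biUnion X = Y ∩ (E \ A).biUnion X := by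
    have hGs : E.biUnion X \ A.biUnion X = (E \ A).biUnion X := sdiff_biUnion hdisjX hA
    rw [← hGs]
    ext x
    simp only [Finset.mem_sdiff, Finset.mem_inter]
    exact ⟨fun ⟨hx, hn⟩ => ⟨hx, hY hx, hn⟩, fun ⟨hx, _, hn⟩ => ⟨hx, hn⟩⟩
  have h3 : ((E.biUnion X \ Y) \ (E \ A).biUnion X).card
      + (Y ∪ (E \ A).biUnion X).card = (E.biUnion X).card := by
    have he : (E.biUnion X \ Y) \ (E \ A).biUnion X
        = E.biUnion X \ (Y ∪ (E \ A).biUnion X) := by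
      ext x
      simp only [Finset.mem_sdiff, Finset.mem_union]
      tauto
    rw [he]
    exact Finset.card_sdiff_add_card_eq_card (Finset.union_subset hY hXB)
  have h4 : (Y ∪ (E \ A).biUnion X).card + (Y ∩ (E \ A).biUnion X).card
      = Y.card + ((E \ A).biUnion X).card :=
    Finset.card_union_add_card_inter Y ((E \ A).biUnion X)
  have h5 : ((E \ A).biUnion X).card = k * (E \ A).card := card_biUnion_k hcard hdisjX hBE
  have h7 : (E.biUnion X).card = k * E.card := card_biUnion_k hcard hdisjX (Finset.Subset.refl E)
  have h6 : A.card + (E \ A).card = E.card := by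
    have := Finset.card_sdiff_add_card_eq_card hA
    omega
  have h8 : k * A.card + k * (E \ A).card = k * E.card := by rw [← Nat.mul_add, h6]
  rw [h2]
  omega

lemma natRank_kDual (h : IsPolymatroid E ρ) (hk : ∀ e ∈ E, ρ {e} ≤ k)
    (hcard : ∀ e ∈ E, (X e).card = k)
    (hdisjX : ∀ e ∈ E, ∀ f ∈ E, e ≠ f → Disjoint (X e) (X f))
    {Y : Finset β} (hY : Y ⊆ E.biUnion X) :
    natRank E (kDual E k ρ) X Y
      = Y.card + natRank E ρ X (E.biUnion X \ Y) - ρ E := by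
  apply le_antisymm
  · obtain ⟨B, hB, hval⟩ := natRank_exists E ρ X (E.biUnion X \ Y)
    have hA : E \ B ⊆ E := Finset.sdiff_subset
    have hid := term_identity h hk hcard hdisjX hA hY
    rw [Finset.sdiff_sdiff_self_left, Finset.inter_eq_right.2 hB] at hid
    have hle := natRank_le E (kDual E k ρ) X Y hA
    omega
  · obtain ⟨A, hA, hval⟩ := natRank_exists E (kDual E k ρ) X Y
    have hid := term_identity h hk hcard hdisjX hA hY
    have hle := natRank_le E ρ X (E.biUnion X \ Y) (Finset.sdiff_subset : E \ A ⊆ E)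
    omega

end main

/-- If `C` is a minor-closed, dual-closed class of matroids (given, extensionally, by a
predicate on ground sets and rank functions), then the class of `k`-polymatroids `ρ` with
`M_ρ^k ∈ C` is closed under `k`-duality. -/
theorem kDual_mem_of_natRank_mem {α β : Type*} [DecidableEq α] [DecidableEq β] (k : ℕ)
    (C : Finset β → (Finset β → ℕ) → Prop)
    (hext : ∀ (G : Finset β) (r r' : Finset β → ℕ),
      (∀ Y ⊆ G, r Y = r' Y) → (C G r ↔ C G r'))
    (hminor : ∀ (G : Finset β) (r : Finset β → ℕ), C G r →
      ∀ D Ct : Finset β, D ⊆ G → Ct ⊆ G → Disjoint D Ct →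
        C ((G \ D) \ Ct) (fun Y => r (Y ∪ Ct) - r Ct))
    (hdual : ∀ (G : Finset β) (r : Finset β → ℕ), C G r →
      C G (fun Y => Y.card + r (G \ Y) - r G))
    (E : Finset α) (ρ : Finset α → ℕ) (h : IsPolymatroid E ρ)
    (hk : ∀ e ∈ E, ρ {e} ≤ k)
    (X : α → Finset β) (hcard : ∀ e ∈ E, (X e).card = k)
    (hdisjX : ∀ e ∈ E, ∀ f ∈ E, e ≠ f → Disjoint (X e) (X f))
    (hC : C (E.biUnion X) (natRank E ρ X)) :
    C (E.biUnion X) (natRank E (kDual E k ρ) X) := by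
  have hd := hdual (E.biUnion X) (natRank E ρ X) hC
  rw [hext (E.biUnion X) (natRank E (kDual E k ρ) X)
    (fun Y => Y.card + natRank E ρ X (E.biUnion X \ Y) - natRank E ρ X (E.biUnion X))
    (fun Y hY => by
      rw [natRank_kDual h hk hcard hdisjX hY, natRank_ground h hk hcard hdisjX])]
  exact hd
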